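/- Let m ≥ 1, t₀ < T, let r : ℝ^m → ℝ^m and q : ℝ^m → (symmetric positive definite m×m matrices) be continuous, let h : ℝ^m → ℝ be continuous, and let Ū : [t₀,T] × ℝ^m → ℝ be continuously differentiable with ∂_s Ū(s,x) + ⟨r(x), ∇_x Ū(s,x)⟩ − (1/2)⟨∇_x Ū(s,x), q(x)·∇_x Ū(s,x)⟩ ≥ 0 on (t₀,T) × ℝ^m and Ū(T,x) ≤ h(x) for all x. Then for every continuously differentiable path φ : [t₀,T] → ℝ^m with φ(t₀) = x₀ one has ∫_{t₀}^T (1/2)⟨φ'(s) − r(φ(s)), q(φ(s))⁻¹(φ'(s) − r(φ(s)))⟩ ds + 2h(φ(T)) − ∫_{t₀}^T [⟨φ'(s) − r(φ(s)), ∇_x Ū(s,φ(s))⟩ + (1/2)⟨∇_x Ū(s,φ(s)), q(φ(s))·∇_x Ū(s,φ(s))⟩] ds ≥ G(t₀,x₀) + Ū(t₀,x₀), where G(t₀,x₀) = inf{∫_{t₀}^T (1/2)⟨ψ'(s) − r(ψ(s)), q(ψ(s))⁻¹(ψ'(s) − r(ψ(s)))⟩ ds + h(ψ(T)) : ψ ∈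 C¹([t₀,T];ℝ^m), ψ(t₀)=x₀}. -/

import Mathlib

/-!
Along a `C¹` path `ψ`, the chain rule and the subsolution inequality give
`d/ds Ū(s, ψ s) ≥ ⟨ψ' - r, ∇Ū⟩ + ½⟨∇Ū, q ∇Ū⟩ ≥ -L(ψ, ψ')`, the second step being the
Fenchel–Young inequality for the quadratic form of `q`. Integrating over `[t₀, T]` and using
`Ū(T, ·) ≤ h`, the first bound gives `Ū(t₀, x₀) ≤ h(φ T) - ∫ [⟨φ' - r, ∇Ū⟩ + ½⟨∇Ū, q ∇Ū⟩]`,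
and the second gives `Ū(t₀, x₀) ≤ ∫ L(ψ, ψ') + h(ψ T)` for every competitor `ψ`, so the
infimum `G` is finite and at most the cost of `φ`. Adding the two bounds proves the claim.
-/

open Matrix

/-- The continuous linear map `w ↦ v ⬝ᵥ w` on `ℝ^m`, used to express the spatial
gradient of a function as a Fréchet derivative. -/
noncomputable def dotCLM {m : ℕ} (v : Fin m → ℝ) : (Fin m → ℝ) →L[ℝ] ℝ :=
  LinearMap.toContinuousLinearMap
    { toFun := fun w => v ⬝ᵥ w
      map_add' := fun w₁ w₂ => by simp [dotProduct_add]
      map_smul' := fun c w => by simp [dotProduct_smul] }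

@[simp] lemma dotCLM_apply {m : ℕ} (v w : Fin m → ℝ) : dotCLM v w = v ⬝ᵥ w := rfl

lemma continuous_of_continuous_dotCLM {X : Type*} [TopologicalSpace X] {m : ℕ}
    {g : X → Fin m → ℝ} (hg : Continuous fun p => dotCLM (g p)) : Continuous g :=
  continuous_pi fun i => by
    simpa using hg.clm_apply (continuous_const (y := Pi.single i (1 : ℝ)))

theorem Continuous.matrix_inv_of_isUnit_det {X R n : Type*} [TopologicalSpace X]
    [Fintype n] [DecidableEq n] [NormedCommRing R] [HasSummableGeomSeries R]
    {A : X → Matrix n n R} (hA : Continuous A) (hdet : ∀ x, IsUnit (A x).det) :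
    Continuous fun x => (A x)⁻¹ :=
  continuous_iff_continuousAt.2 fun x =>
    (continuousAt_matrix_inv _ (NormedRing.inverse_continuousAt (hdet x).unit)).comp
      hA.continuousAt

/-- Fenchel–Young inequality for the quadratic form of `M`: expand
`0 ≤ ⟨v + M p, M⁻¹ (v + M p)⟩`. -/
theorem Matrix.PosDef.neg_dotProduct_sub_half_le {n : Type*} [Fintype n] [DecidableEq n]
    {M : Matrix n n ℝ} (hM : M.PosDef) (v p : n → ℝ) :
    -(v ⬝ᵥ p) - 1 / 2 * (p ⬝ᵥ M *ᵥ p) ≤ 1 / 2 * (v ⬝ᵥ M⁻¹ *ᵥ v) := by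
  have hunit : IsUnit M.det := hM.isUnit.map detMonoidHom
  have hsymm : ∀ a b : n → ℝ, M *ᵥ a ⬝ᵥ b = a ⬝ᵥ M *ᵥ b := fun a b => by
    rw [dotProduct_mulVec, ← mulVec_transpose, show Mᵀ = M from hM.isHermitian]
  have hnonneg : 0 ≤ (v + M *ᵥ p) ⬝ᵥ M⁻¹ *ᵥ (v + M *ᵥ p) := by
    simpa using hM.inv.posSemidef.dotProduct_mulVec_nonneg (v + M *ᵥ p)
  have hexpand : (v + M *ᵥ p) ⬝ᵥ M⁻¹ *ᵥ (v + M *ᵥ p)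
      = v ⬝ᵥ M⁻¹ *ᵥ v + 2 * (v ⬝ᵥ p) + p ⬝ᵥ M *ᵥ p := by
    simp only [mulVec_add, add_dotProduct, dotProduct_add, mulVec_mulVec,
      nonsing_inv_mul M hunit, one_mulVec, hsymm p, mul_nonsing_inv M hunit,
      dotProduct_comm p v]
    ring
  linarith

section PartialDerivatives

variable {E : Type*} [NormedAddCommGroup E] [NormedSpace ℝ E] {U : ℝ → E → ℝ}
  {D : ℝ × E →L[ℝ] ℝ} {s a : ℝ} {x : E} {L : E →L[ℝ] ℝ}

theorem HasFDerivAt.uncurry_apply_inl_eq (hD : HasFDerivAt (Function.uncurry U) D (s, x))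
    (ht : HasDerivAt (fun t => U t x) a s) : D (1, 0) = a := by
  have hline : HasDerivAt (fun t : ℝ => (t, x)) ((1 : ℝ), (0 : E)) s :=
    (hasDerivAt_id s).prodMk (hasDerivAt_const s x)
  have hcomp := hD.comp_hasDerivAt s hline
  exact (ht.unique hcomp).symm

theorem HasFDerivAt.uncurry_comp_inr_eq (hD : HasFDerivAt (Function.uncurry U) D (s, x))
    (hx : HasFDerivAt (U s) L x) : D.comp (ContinuousLinearMap.inr ℝ ℝ E) = L := by
  have hslice : HasFDerivAt (fun y : E => (s, y)) (ContinuousLinearMap.inr ℝ ℝ E) x :=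
    (hasFDerivAt_const s x).prodMk (hasFDerivAt_id x)
  have hcomp := hD.comp x hslice
  exact (hx.unique hcomp).symm

theorem HasFDerivAt.uncurry_apply_eq (hD : HasFDerivAt (Function.uncurry U) D (s, x))
    (ht : HasDerivAt (fun t => U t x) a s) (hx : HasFDerivAt (U s) L x) (c : ℝ) (v : E) :
    D (c, v) = c * a + L v := by
  have hsplit : ((c, v) : ℝ × E) = c • ((1 : ℝ), (0 : E)) + (0, v) := by simp
  rw [hsplit, map_add, map_smul, hD.uncurry_apply_inl_eq ht, ← hD.uncurry_comp_inr_eq hx,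
    smul_eq_mul]
  rfl

theorem DifferentiableAt.hasDerivAt_uncurry_comp {ψ : ℝ → E} {ψ' : E}
    (hU : DifferentiableAt ℝ (Function.uncurry U) (s, ψ s))
    (ht : HasDerivAt (fun t => U t (ψ s)) a s) (hx : HasFDerivAt (U s) L (ψ s))
    (hψ : HasDerivAt ψ ψ' s) : HasDerivAt (fun t => U t (ψ t)) (a + L ψ') s := by
  have hpath := hU.hasFDerivAt.comp_hasDerivAt s ((hasDerivAt_id s).prodMk hψ)
  rw [hU.hasFDerivAt.uncurry_apply_eq ht hx, one_mul] at hpath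
  exact hpath

theorem integral_le_sub_of_le_deriv_uncurry_comp {Ut : ℝ → E → ℝ}
    {Ux : ℝ → E → E →L[ℝ] ℝ} {ψ ψ' : ℝ → E} {f : ℝ → ℝ} {t₀ T : ℝ} (ht : t₀ ≤ T)
    (hU : Differentiable ℝ (Function.uncurry U))
    (hUt : ∀ s x, HasDerivAt (fun t => U t x) (Ut s x) s)
    (hUx : ∀ s x, HasFDerivAt (U s) (Ux s x) x) (hψ : ∀ s, HasDerivAt ψ (ψ' s) s)
    (hf : Continuous f) (hle : ∀ s ∈ Set.Ioo t₀ T, f s ≤ Ut s (ψ s) + Ux s (ψ s) (ψ' s)) :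
    ∫ s in t₀..T, f s ≤ U T (ψ T) - U t₀ (ψ t₀) := by
  have hchain : ∀ s, HasDerivAt (fun t => U t (ψ t)) (Ut s (ψ s) + Ux s (ψ s) (ψ' s)) s :=
    fun s => (hU _).hasDerivAt_uncurry_comp (hUt s (ψ s)) (hUx s (ψ s)) (hψ s)
  exact intervalIntegral.integral_le_sub_of_hasDeriv_right_of_le ht
    (fun s _ => (hchain s).continuousAt.continuousWithinAt)
    (fun s _ => (hchain s).hasDerivWithinAt) hf.integrableOn_Icc hle

theorem ContDiff.continuous_uncurry_of_hasDerivAt_fst {Ut : ℝ → E → ℝ}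
    (hU : ContDiff ℝ 1 (Function.uncurry U))
    (hUt : ∀ s x, HasDerivAt (fun t => U t x) (Ut s x) s) :
    Continuous (Function.uncurry Ut) := by
  have hfderiv : Function.uncurry Ut = fun p => fderiv ℝ (Function.uncurry U) p (1, 0) := by
    funext ⟨s, x⟩
    exact ((hU.differentiable one_ne_zero _).hasFDerivAt.uncurry_apply_inl_eq (hUt s x)).symm
  rw [hfderiv]
  exact (hU.continuous_fderiv one_ne_zero).clm_apply continuous_const

theorem ContDiff.continuous_uncurry_of_hasFDerivAt_snd {Ux : ℝ → E → E →L[ℝ] ℝ}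
    (hU : ContDiff ℝ 1 (Function.uncurry U))
    (hUx : ∀ s x, HasFDerivAt (U s) (Ux s x) x) : Continuous (Function.uncurry Ux) := by
  have hfderiv : Function.uncurry Ux =
      fun p => (fderiv ℝ (Function.uncurry U) p).comp (ContinuousLinearMap.inr ℝ ℝ E) := by
    funext ⟨s, x⟩
    exact ((hU.differentiable one_ne_zero _).hasFDerivAt.uncurry_comp_inr_eq (hUx s x)).symm
  rw [hfderiv]
  exact (hU.continuous_fderiv one_ne_zero).clm_comp continuous_const

end PartialDerivatives

theorem ContDiff.continuous_of_hasDerivAt {F : Type*} [NormedAddCommGroup F] [NormedSpace ℝ F]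
    {f f' : ℝ → F} (hf : ContDiff ℝ 1 f) (hf' : ∀ s, HasDerivAt f (f' s) s) : Continuous f' := by
  rw [show f' = deriv f from funext fun s => (hf' s).deriv.symm]
  exact hf.continuous_deriv le_rfl

theorem dotProduct_add_half_le_of_nonneg_add_sub_half {n : Type*} [Fintype n]
    {Q : Matrix n n ℝ} {a : ℝ} {ρ p β : n → ℝ}
    (h : 0 ≤ a + ρ ⬝ᵥ p - 1 / 2 * (p ⬝ᵥ Q *ᵥ p)) :
    (β - ρ) ⬝ᵥ p + 1 / 2 * (p ⬝ᵥ Q *ᵥ p) ≤ a + p ⬝ᵥ β := by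
  rw [sub_dotProduct, dotProduct_comm β]
  linarith

noncomputable def lagrangian {m : ℕ} (r : (Fin m → ℝ) → Fin m → ℝ)
    (q : (Fin m → ℝ) → Matrix (Fin m) (Fin m) ℝ) (x β : Fin m → ℝ) : ℝ :=
  1 / 2 * ((β - r x) ⬝ᵥ (q x)⁻¹ *ᵥ (β - r x))

section Verification

variable {m : ℕ} {t₀ T : ℝ} {r : (Fin m → ℝ) → Fin m → ℝ}
  {q : (Fin m → ℝ) → Matrix (Fin m) (Fin m) ℝ} {U Ut : ℝ → (Fin m → ℝ) → ℝ}
  {Ux : ℝ → (Fin m → ℝ) → Fin m → ℝ} {ψ ψ' : ℝ → Fin m → ℝ}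

theorem neg_lagrangian_le {x : Fin m → ℝ} (hq : (q x).PosDef) (β p : Fin m → ℝ) :
    -lagrangian r q x β ≤ (β - r x) ⬝ᵥ p + 1 / 2 * (p ⬝ᵥ q x *ᵥ p) := by
  have := hq.neg_dotProduct_sub_half_le (β - r x) p
  unfold lagrangian
  linarith

theorem Continuous.lagrangian_comp (hr : Continuous r) (hqc : Continuous q)
    (hqpd : ∀ x, (q x).PosDef) (hψ : Continuous ψ) (hψ' : Continuous ψ') :
    Continuous fun s => lagrangian r q (ψ s) (ψ' s) := by
  have hqinv := hqc.matrix_inv_of_isUnit_det fun x => (hqpd x).isUnit.map detMonoidHom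
  have hv : Continuous fun s => ψ' s - r (ψ s) := hψ'.sub (hr.comp hψ)
  exact continuous_const.mul (hv.dotProduct ((hqinv.comp hψ).matrix_mulVec hv))

theorem integral_le_sub_of_subsolution (ht : t₀ ≤ T) (hr : Continuous r) (hqc : Continuous q)
    (hU : ContDiff ℝ 1 (Function.uncurry U))
    (hUt : ∀ s x, HasDerivAt (fun t => U t x) (Ut s x) s)
    (hUx : ∀ s x, HasFDerivAt (fun y => U s y) (dotCLM (Ux s x)) x)
    (hsub : ∀ s ∈ Set.Ioo t₀ T, ∀ x,
      0 ≤ Ut s x + r x ⬝ᵥ Ux s x - 1 / 2 * (Ux s x ⬝ᵥ q x *ᵥ Ux s x))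
    (hψ : ∀ s, HasDerivAt ψ (ψ' s) s) (hψ' : Continuous ψ') :
    ∫ s in t₀..T,
        ((ψ' s - r (ψ s)) ⬝ᵥ Ux s (ψ s) + 1 / 2 * (Ux s (ψ s) ⬝ᵥ q (ψ s) *ᵥ Ux s (ψ s)))
      ≤ U T (ψ T) - U t₀ (ψ t₀) := by
  have hψc : Continuous ψ := continuous_iff_continuousAt.2 fun s => (hψ s).continuousAt
  have hUxc : Continuous fun s => Ux s (ψ s) := continuous_of_continuous_dotCLM
    ((hU.continuous_uncurry_of_hasFDerivAt_snd hUx).comp (continuous_id.prodMk hψc) :)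
  refine integral_le_sub_of_le_deriv_uncurry_comp ht (hU.differentiable one_ne_zero) hUt hUx hψ
    ?_ fun s hs => dotProduct_add_half_le_of_nonneg_add_sub_half (hsub s hs (ψ s))
  exact ((hψ'.sub (hr.comp hψc)).dotProduct hUxc).add
    (continuous_const.mul (hUxc.dotProduct ((hqc.comp hψc).matrix_mulVec hUxc)))

theorem le_integral_lagrangian_add_of_subsolution (ht : t₀ ≤ T) (hr : Continuous r)
    (hqc : Continuous q) (hqpd : ∀ x, (q x).PosDef)
    (hU : ContDiff ℝ 1 (Function.uncurry U))
    (hUt : ∀ s x, HasDerivAt (fun t => U t x) (Ut s x) s)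
    (hUx : ∀ s x, HasFDerivAt (fun y => U s y) (dotCLM (Ux s x)) x)
    (hsub : ∀ s ∈ Set.Ioo t₀ T, ∀ x,
      0 ≤ Ut s x + r x ⬝ᵥ Ux s x - 1 / 2 * (Ux s x ⬝ᵥ q x *ᵥ Ux s x))
    (hψ : ∀ s, HasDerivAt ψ (ψ' s) s) (hψ' : Continuous ψ') :
    U t₀ (ψ t₀) ≤ (∫ s in t₀..T, lagrangian r q (ψ s) (ψ' s)) + U T (ψ T) := by
  have hψc : Continuous ψ := continuous_iff_continuousAt.2 fun s => (hψ s).continuousAt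
  have hle := integral_le_sub_of_le_deriv_uncurry_comp
    (f := fun s => -lagrangian r q (ψ s) (ψ' s)) ht (hU.differentiable one_ne_zero) hUt hUx hψ
    (hr.lagrangian_comp hqc hqpd hψc hψ').neg fun s hs =>
      (neg_lagrangian_le (hqpd (ψ s)) (ψ' s) (Ux s (ψ s))).trans
        (dotProduct_add_half_le_of_nonneg_add_sub_half (hsub s hs (ψ s)))
  rw [intervalIntegral.integral_neg] at hle
  linarith

end Verification

theorem importance_sampling_variational_core_general {m : ℕ} (t₀ T : ℝ) (ht : t₀ < T)
    (r : (Fin m → ℝ) → (Fin m → ℝ)) (q : (Fin m → ℝ) → Matrix (Fin m) (Fin m) ℝ)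
    (hr : Continuous r) (hqc : Continuous q) (hqpd : ∀ x, (q x).PosDef)
    (h : (Fin m → ℝ) → ℝ)
    (U Ut : ℝ → (Fin m → ℝ) → ℝ) (Ux : ℝ → (Fin m → ℝ) → (Fin m → ℝ))
    (hU : ContDiff ℝ 1 (Function.uncurry U))
    (hUt : ∀ s x, HasDerivAt (fun t => U t x) (Ut s x) s)
    (hUx : ∀ s x, HasFDerivAt (fun y => U s y) (dotCLM (Ux s x)) x)
    (hsub : ∀ s ∈ Set.Ioo t₀ T, ∀ x,
      0 ≤ Ut s x + r x ⬝ᵥ Ux s x - (1 / 2) * (Ux s x ⬝ᵥ (q x).mulVec (Ux s x)))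
    (hterm : ∀ x, U T x ≤ h x)
    (x₀ : Fin m → ℝ)
    (G : ℝ)
    (hG : G = sInf { y : ℝ | ∃ ψ ψ' : ℝ → Fin m → ℝ, ContDiff ℝ 1 ψ ∧
          (∀ s, HasDerivAt ψ (ψ' s) s) ∧ ψ t₀ = x₀ ∧
          y = (∫ s in t₀..T,
                (1 / 2) * ((ψ' s - r (ψ s)) ⬝ᵥ (q (ψ s))⁻¹.mulVec (ψ' s - r (ψ s))))
                + h (ψ T) }) :
    ∀ φ φ' : ℝ → Fin m → ℝ, ContDiff ℝ 1 φ → (∀ s, HasDerivAt φ (φ' s) s) →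
      φ t₀ = x₀ →
      G + U t₀ x₀ ≤
        (∫ s in t₀..T,
          (1 / 2) * ((φ' s - r (φ s)) ⬝ᵥ (q (φ s))⁻¹.mulVec (φ' s - r (φ s))))
        + 2 * h (φ T)
        - ∫ s in t₀..T,
            ((φ' s - r (φ s)) ⬝ᵥ Ux s (φ s)
              + (1 / 2) * (Ux s (φ s) ⬝ᵥ (q (φ s)).mulVec (Ux s (φ s)))) := by
  intro φ φ' hφ hφd hφ₀
  have hG_le : G ≤ (∫ s in t₀..T, lagrangian r q (φ s) (φ' s)) + h (φ T) := by
    rw [hG]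
    refine csInf_le ⟨U t₀ x₀, ?_⟩ ⟨φ, φ', hφ, hφd, hφ₀, rfl⟩
    rintro _ ⟨ψ, ψ', hψ, hψd, rfl, rfl⟩
    exact (le_integral_lagrangian_add_of_subsolution ht.le hr hqc hqpd hU hUt hUx hsub hψd
      (hψ.continuous_of_hasDerivAt hψd)).trans (add_le_add_right (hterm (ψ T)) _)
  have hverif := integral_le_sub_of_subsolution ht.le hr hqc hU hUt hUx hsub hφd
    (hφ.continuous_of_hasDerivAt hφd)
  rw [hφ₀] at hverif
  have := hterm (φ T)
  unfold lagrangian at hG_le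
  linarith

/-- Deterministic variational core of the importance-sampling optimality theorem:
for a classical `C¹` subsolution `Ū` of the homogenized HJB equation with `Ū(T,·) ≤ h`,
every `C¹` path `φ` with `φ(t₀) = x₀` satisfies
`∫ L(φ,φ') ds + 2h(φ(T)) − ∫ [⟨φ'−r(φ), ∇_xŪ⟩ + (1/2)⟨∇_xŪ, q(φ)∇_xŪ⟩] ds
   ≥ G(t₀,x₀) + Ū(t₀,x₀)`,
where `L(x,β) = (1/2)⟨β−r(x), q(x)⁻¹(β−r(x))⟩` and `G` is the value function. -/
theorem importance_sampling_variational_core {m : ℕ} (hm : 1 ≤ m) (t₀ T : ℝ) (ht : t₀ < T)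
    (r : (Fin m → ℝ) → (Fin m → ℝ)) (q : (Fin m → ℝ) → Matrix (Fin m) (Fin m) ℝ)
    (hr : Continuous r) (hqc : Continuous q) (hqpd : ∀ x, (q x).PosDef)
    (h : (Fin m → ℝ) → ℝ) (hh : Continuous h)
    (U Ut : ℝ → (Fin m → ℝ) → ℝ) (Ux : ℝ → (Fin m → ℝ) → (Fin m → ℝ))
    (hU : ContDiff ℝ 1 (Function.uncurry U))
    (hUt : ∀ s x, HasDerivAt (fun t => U t x) (Ut s x) s)
    (hUx : ∀ s x, HasFDerivAt (fun y => U s y) (dotCLM (Ux s x)) x)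
    (hsub : ∀ s ∈ Set.Ioo t₀ T, ∀ x,
      0 ≤ Ut s x + r x ⬝ᵥ Ux s x - (1 / 2) * (Ux s x ⬝ᵥ (q x).mulVec (Ux s x)))
    (hterm : ∀ x, U T x ≤ h x)
    (x₀ : Fin m → ℝ)
    (G : ℝ)
    (hG : G = sInf { y : ℝ | ∃ ψ ψ' : ℝ → Fin m → ℝ, ContDiff ℝ 1 ψ ∧
          (∀ s, HasDerivAt ψ (ψ' s) s) ∧ ψ t₀ = x₀ ∧
          y = (∫ s in t₀..T,
                (1 / 2) * ((ψ' s - r (ψ s)) ⬝ᵥ (q (ψ s))⁻¹.mulVec (ψ' s - r (ψ s))))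
                + h (ψ T) }) :
    ∀ φ φ' : ℝ → Fin m → ℝ, ContDiff ℝ 1 φ → (∀ s, HasDerivAt φ (φ' s) s) →
      φ t₀ = x₀ →
      G + U t₀ x₀ ≤
        (∫ s in t₀..T,
          (1 / 2) * ((φ' s - r (φ s)) ⬝ᵥ (q (φ s))⁻¹.mulVec (φ' s - r (φ s))))
        + 2 * h (φ T)
        - ∫ s in t₀..T,
            ((φ' s - r (φ s)) ⬝ᵥ Ux s (φ s)
              + (1 / 2) * (Ux s (φ s) ⬝ᵥ (q (φ s)).mulVec (Ux s (φ s)))) :=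
  importance_sampling_variational_core_general t₀ T ht r q hr hqc hqpd h U Ut Ux hU hUt hUx hsub
    hterm x₀ G hG
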